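/- For every connected simple graph G with at least three vertices, the incidence chromatic number satisfies Δ(G) + 1 ≤ χ_i(G) ≤ 3Δ(G) − 2, where Δ(G) is the maximum degree of G. -/

import Mathlib

/-!
Lower bound: at a vertex `v` of maximum degree, the incidences `(v, vx)` together with one
incidence `(u, uv)` are pairwise adjacent.

Upper bound: write the incidence `(v, vu)` as the dart `(v, u)`. It is adjacent to the other darts
leaving `v`, the darts leaving `u` and the other darts entering `v`: at most `3Δ - 2` darts, so plain
greedy colouring needs `3Δ - 1` colours. Fix a root `r` and colour greedily, first the darts
entering `r` (pairwise non-adjacent, so all coloured `0`), then the others grouped by their first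
vertex, the groups by decreasing distance from `r`. When `(v, u)` is coloured, one colour is saved:
if `v = r`, the darts entering `r` share the colour `0`; if `u` precedes `v`, the dart entering `v`
from a neighbour closer to `r` is still uncoloured; if `v` precedes `u`, of the darts leaving `u`
only `(u, r)` can be coloured. (The first and last cases use `Δ ≥ 2`, which holds as `G` is
connected with at least three vertices.)
-/

/-- `(v, e)` is an incidence of the simple graph `G` when `e` is an edge of `G` and `v` is an
endpoint of `e`. -/
def IsIncidence {V : Type*} (G : SimpleGraph V) (v : V) (e : Sym2 V) : Prop :=
  e ∈ G.edgeSet ∧ v ∈ e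

/-- Two incidences `(v, e)` and `(w, f)` are adjacent if `v = w`, or `e = f`, or the edge
joining `v` and `w` is `e` or `f`. -/
def IncAdj {V : Type*} (v : V) (e : Sym2 V) (w : V) (f : Sym2 V) : Prop :=
  v = w ∨ e = f ∨ s(v, w) = e ∨ s(v, w) = f

/-- The incidence chromatic number of `G`: the least `k` such that `G` has a proper incidence
coloring using colors from `{0, …, k-1}`. -/
noncomputable def incChromaticNumber {V : Type*} (G : SimpleGraph V) : ℕ :=
  sInf {k | ∃ φ : V × Sym2 V → ℕ,
    (∀ v e, IsIncidence G v e → φ (v, e) < k) ∧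
    (∀ v e w f, IsIncidence G v e → IsIncidence G w f → (v, e) ≠ (w, f) → IncAdj v e w f →
      φ (v, e) ≠ φ (w, f))}

open Finset

section Greedy

variable {α β : Type*} [Fintype α] [LinearOrder β] (R : α → α → Prop) (key : α → β)

open Classical in
noncomputable def earlierConflicts (a : α) : Finset α := {b | R b a ∧ key b < key a}

lemma card_key_lt_lt {a b : α} (h : key b < key a) :
    #{x | key x < key b} < #{x | key x < key a} := by
  refine card_lt_card ((ssubset_iff_of_subset fun x hx => ?_).2 ⟨b, ?_, ?_⟩)
  · simp only [mem_filter, mem_univ, true_and] at hx ⊢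
    exact hx.trans h
  · simpa using h
  · simp

open Classical in
noncomputable def greedyColoring (a : α) : ℕ :=
  sInf (((earlierConflicts R key a).attach.image fun b => greedyColoring b.1 : Finset ℕ) : Set ℕ)ᶜ
termination_by #{b | key b < key a}
decreasing_by
  exact card_key_lt_lt key (by have := b.2; simp_all [earlierConflicts])

noncomputable def forbiddenColors (a : α) : Finset ℕ :=
  (earlierConflicts R key a).image (greedyColoring R key)

variable {R key}

lemma mem_earlierConflicts {a b : α} : b ∈ earlierConflicts R key a ↔ R b a ∧ key b < key a := by
  simp [earlierConflicts]

lemma greedyColoring_eq (a : α) :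
    greedyColoring R key a = sInf ((forbiddenColors R key a : Set ℕ)ᶜ) := by
  classical
  rw [greedyColoring, forbiddenColors]
  congr 3
  ext c
  simp

lemma greedyColoring_notMem (a : α) : greedyColoring R key a ∉ forbiddenColors R key a := by
  rw [greedyColoring_eq]
  exact Nat.sInf_mem (finite_toSet _).infinite_compl.nonempty

lemma greedyColoring_lt_of_card_lt {a : α} {k : ℕ}
    (h : #(forbiddenColors R key a) < k) :
    greedyColoring R key a < k := by
  obtain ⟨c, hck, hc⟩ := exists_mem_notMem_of_card_lt_card (h.trans_eq (card_range k).symm)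
  rw [greedyColoring_eq]
  exact (Nat.sInf_le hc).trans_lt (mem_range.1 hck)

lemma greedyColoring_ne_of_key_lt {a b : α} (h : R a b) (hab : key a < key b) :
    greedyColoring R key a ≠ greedyColoring R key b := fun heq =>
  greedyColoring_notMem b <|
    heq ▸ mem_image_of_mem (greedyColoring R key) (mem_earlierConflicts.2 ⟨h, hab⟩)

lemma greedyColoring_ne (hR : ∀ a b, R a b → R b a) (hkey : Function.Injective key) {a b : α}
    (hne : a ≠ b) (h : R a b) : greedyColoring R key a ≠ greedyColoring R key b := by
  rcases (hkey.ne hne).lt_or_gt with hab | hba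
  · exact greedyColoring_ne_of_key_lt h hab
  · exact (greedyColoring_ne_of_key_lt (hR a b h) hba).symm

end Greedy

lemma IncAdj.symm {V : Type*} {v w : V} {e f : Sym2 V} (h : IncAdj v e w f) : IncAdj w f v e := by
  rcases h with h | h | h | h
  · exact .inl h.symm
  · exact .inr (.inl h.symm)
  · exact .inr (.inr (.inr (Sym2.eq_swap.trans h)))
  · exact .inr (.inr (.inl (Sym2.eq_swap.trans h)))

noncomputable def IsIncidence.toDart {V : Type*} {G : SimpleGraph V} {v : V} {e : Sym2 V}
    (h : IsIncidence G v e) : G.Dart :=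
  ⟨(v, Sym2.Mem.other h.2), by rw [← SimpleGraph.mem_edgeSet, Sym2.other_spec]; exact h.1⟩

lemma IsIncidence.toDart_fst {V : Type*} {G : SimpleGraph V} {v : V} {e : Sym2 V}
    (h : IsIncidence G v e) : h.toDart.fst = v := rfl

lemma IsIncidence.toDart_edge {V : Type*} {G : SimpleGraph V} {v : V} {e : Sym2 V}
    (h : IsIncidence G v e) : h.toDart.edge = e := Sym2.other_spec h.2

namespace SimpleGraph

variable {V : Type*} {G : SimpleGraph V}

lemma Dart.isIncidence (d : G.Dart) : IsIncidence G d.fst d.edge :=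
  ⟨d.edge_mem, Sym2.mem_mk_left _ _⟩

lemma Dart.eq_of_fst_eq_of_edge_eq {d d' : G.Dart} (hfst : d.fst = d'.fst)
    (hedge : d.edge = d'.edge) : d = d' := by
  rcases (dart_edge_eq_iff d d').1 hedge with h | rfl
  · exact h
  · exact absurd hfst d'.adj.ne.symm

def Dart.IncAdj (d d' : G.Dart) : Prop := _root_.IncAdj d.fst d.edge d'.fst d'.edge

lemma Dart.IncAdj.symm {d d' : G.Dart} (h : d.IncAdj d') : d'.IncAdj d :=
  _root_.IncAdj.symm h

lemma Dart.incAdj_iff {d d' : G.Dart} :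
    d.IncAdj d' ↔ d'.fst = d.fst ∨ d'.fst = d.snd ∨ d'.snd = d.fst := by
  obtain ⟨⟨a, b⟩, hab⟩ := d
  obtain ⟨⟨c, e⟩, hce⟩ := d'
  have := hab.ne
  have := hce.ne
  simp only [Dart.IncAdj, _root_.IncAdj, Dart.edge_mk, Sym2.eq_iff]
  grind

variable (G) in
def IsDartIncColoring (k : ℕ) (c : G.Dart → ℕ) : Prop :=
  (∀ d, c d < k) ∧ ∀ d d', d ≠ d' → d.IncAdj d' → c d ≠ c d'

lemma incChromaticNumber_eq_sInf_isDartIncColoring :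
    incChromaticNumber G = sInf {k | ∃ c, G.IsDartIncColoring k c} := by
  classical
  refine congrArg sInf (Set.ext fun k => ⟨?_, ?_⟩)
  · rintro ⟨φ, hlt, hproper⟩
    refine ⟨fun d => φ (d.fst, d.edge), fun d => hlt _ _ d.isIncidence, fun d d' hne hadj => ?_⟩
    refine hproper _ _ _ _ d.isIncidence d'.isIncidence (fun h => hne ?_) hadj
    exact Dart.eq_of_fst_eq_of_edge_eq (Prod.ext_iff.1 h).1 (Prod.ext_iff.1 h).2
  · rintro ⟨c, hlt, hproper⟩
    refine ⟨fun p => if h : IsIncidence G p.1 p.2 then c h.toDart else 0, ?_, ?_⟩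
    · intro v e h
      simpa [h] using hlt h.toDart
    · intro v e w f hve hwf hne hadj
      simp only [hve, hwf, dite_true]
      refine hproper _ _ (fun h => hne ?_) ?_
      · exact Prod.ext (congrArg (·.fst) h)
          (hve.toDart_edge.symm.trans ((congrArg Dart.edge h).trans hwf.toDart_edge))
      · rwa [Dart.IncAdj, hve.toDart_fst, hve.toDart_edge, hwf.toDart_fst, hwf.toDart_edge]

lemma IsDartIncColoring.card_le {k : ℕ} {c : G.Dart → ℕ} (hc : G.IsDartIncColoring k c)
    {S : Finset G.Dart} (hS : ∀ d ∈ S, ∀ d' ∈ S, d.IncAdj d') : #S ≤ k := by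
  simpa using card_le_card_of_injOn c (fun d _ => mem_range.2 (hc.1 d))
    fun d hd d' hd' heq => by_contra fun hne => hc.2 d d' hne (hS d hd d' hd') heq

lemma Connected.two_le_maxDegree [Fintype V] [DecidableRel G.Adj] (hconn : G.Connected)
    (hcard : 3 ≤ Fintype.card V) : 2 ≤ G.maxDegree := by
  by_contra! h
  have hsum : ∑ v, G.degree v ≤ Fintype.card V := by
    have := sum_le_card_nsmul univ (fun v => G.degree v) 1
      fun v _ => (G.degree_le_maxDegree v).trans (Nat.lt_succ_iff.1 h)
    simpa using this
  have hedges := hconn.card_vert_le_card_edgeSet_add_one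
  rw [sum_degrees_eq_twice_card_edges] at hsum
  simp only [Nat.card_eq_fintype_card, ← edgeFinset_card] at hedges
  omega

lemma Reachable.exists_adj_dist_lt {v r : V} (h : G.Reachable v r) (hv : v ≠ r) :
    ∃ w, G.Adj v w ∧ G.dist w r < G.dist v r := by
  obtain ⟨p, hp⟩ := h.exists_walk_length_eq_dist
  cases p with
  | nil => exact absurd rfl hv
  | cons hadj q =>
    refine ⟨_, hadj, ?_⟩
    have := G.dist_le q
    rw [Walk.length_cons] at hp
    omega

section DartFibers

variable [Fintype V] [DecidableEq V] [DecidableRel G.Adj]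

variable (G) in
def dartsFrom (v : V) : Finset G.Dart := {d | d.fst = v}

variable (G) in
def dartsTo (v : V) : Finset G.Dart := {d | d.snd = v}

@[simp] lemma mem_dartsFrom {v : V} {d : G.Dart} : d ∈ G.dartsFrom v ↔ d.fst = v := by
  simp [dartsFrom]

@[simp] lemma mem_dartsTo {v : V} {d : G.Dart} : d ∈ G.dartsTo v ↔ d.snd = v := by
  simp [dartsTo]

lemma card_dartsFrom (v : V) : #(G.dartsFrom v) = G.degree v :=
  dart_fst_fiber_card_eq_degree G v

lemma card_dartsTo (v : V) : #(G.dartsTo v) = G.degree v := by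
  rw [← card_dartsFrom]
  exact card_nbij' Dart.symm Dart.symm (fun d hd => by simp_all) (fun d hd => by simp_all)
    (fun d _ => d.symm_symm) (fun d _ => d.symm_symm)

lemma card_erase_dartsFrom (d : G.Dart) : #((G.dartsFrom d.fst).erase d) = G.degree d.fst - 1 := by
  rw [card_erase_of_mem (mem_dartsFrom.2 rfl), card_dartsFrom]

lemma card_erase_dartsTo (d : G.Dart) :
    #((G.dartsTo d.fst).erase d.symm) = G.degree d.fst - 1 := by
  rw [card_erase_of_mem (s := G.dartsTo d.fst) (mem_dartsTo.2 rfl), card_dartsTo]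

lemma IsDartIncColoring.degree_lt {k : ℕ} {c : G.Dart → ℕ} (hc : G.IsDartIncColoring k c)
    {u v : V} (huv : G.Adj u v) : G.degree v < k := by
  let d₀ : G.Dart := ⟨(u, v), huv⟩
  have hd₀ : d₀ ∉ G.dartsFrom v := by simpa using huv.ne
  have hS : ∀ d ∈ insert d₀ (G.dartsFrom v), ∀ d' ∈ insert d₀ (G.dartsFrom v), d.IncAdj d' := by
    simp only [mem_insert, mem_dartsFrom, Dart.incAdj_iff]
    rintro d (rfl | hd) d' (rfl | hd') <;> simp_all [d₀]
  have := hc.card_le hS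
  rwa [card_insert_of_notMem hd₀, card_dartsFrom, Nat.add_one_le_iff] at this

lemma Dart.IncAdj.cases {b d : G.Dart} (h : b.IncAdj d) (hne : b ≠ d) :
    b ∈ (G.dartsFrom d.fst).erase d ∨ b.fst = d.snd ∨ b ∈ (G.dartsTo d.fst).erase d.symm := by
  rcases Dart.incAdj_iff.1 h with h | h | h
  · exact .inl (mem_erase.2 ⟨hne, by simp [h]⟩)
  · by_cases hb : b = d.symm
    · exact .inr (.inl (by simp [hb]))
    · exact .inr (.inr (mem_erase.2 ⟨hb, by simp [h]⟩))
  · exact .inr (.inl h.symm)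

end DartFibers

end SimpleGraph

namespace SimpleGraph

variable {V : Type*} (G : SimpleGraph V) (r : V)

noncomputable def distKey (v : V) : ℕᵒᵈ ×ₗ V := toLex (OrderDual.toDual (G.dist v r), v)

variable {G r}

lemma distKey_injective : Function.Injective (G.distKey r) := fun _ _ h =>
  (Prod.ext_iff.1 (toLex.injective h)).2

variable [LinearOrder V]

variable (G r) in
noncomputable def dartKey (d : G.Dart) : Bool ×ₗ (ℕᵒᵈ ×ₗ V) ×ₗ V :=
  toLex (decide (d.snd ≠ r), toLex (G.distKey r d.fst, d.snd))

lemma distKey_lt_of_dist_lt {v w : V} (h : G.dist w r < G.dist v r) :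
    G.distKey r v < G.distKey r w :=
  Prod.Lex.toLex_lt_toLex.2 (.inl h)

lemma dartKey_injective : Function.Injective (G.dartKey r) := fun d d' h => by
  simp only [dartKey, EmbeddingLike.apply_eq_iff_eq, Prod.mk.injEq] at h
  exact Dart.ext _ _ (Prod.ext (distKey_injective h.2.1) h.2.2)

lemma dartKey_lt_of_snd_eq {d d' : G.Dart} (hd' : d'.snd = r) (hd : d.snd ≠ r) :
    G.dartKey r d' < G.dartKey r d :=
  Prod.Lex.toLex_lt_toLex.2 (.inl (by simp [hd, hd']))

lemma distKey_le_of_dartKey_lt {d d' : G.Dart} (hd' : d'.snd ≠ r)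
    (h : G.dartKey r d' < G.dartKey r d) : G.distKey r d'.fst ≤ G.distKey r d.fst := by
  rcases Prod.Lex.toLex_lt_toLex.1 h with h | ⟨-, h⟩
  · exact absurd h (not_lt.2 (by simp [hd']))
  · rcases Prod.Lex.toLex_lt_toLex.1 h with h | ⟨h, -⟩
    · exact h.le
    · exact h.le

end SimpleGraph

namespace SimpleGraph

variable {V : Type*} [LinearOrder V] [Fintype V] {G : SimpleGraph V} [DecidableRel G.Adj] {r : V}

lemma greedyColoring_dartKey_eq_zero {d : G.Dart} (hd : d.snd = r) :
    greedyColoring Dart.IncAdj (G.dartKey r) d = 0 := by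
  suffices earlierConflicts Dart.IncAdj (G.dartKey r) d = ∅ from
    Nat.lt_one_iff.1 (greedyColoring_lt_of_card_lt (by simp [forbiddenColors, this]))
  refine eq_empty_of_forall_notMem fun b hb => ?_
  obtain ⟨hbd, hlt⟩ := mem_earlierConflicts.1 hb
  have hb : b.snd = r := by_contra fun h => (dartKey_lt_of_snd_eq hd h).not_gt hlt
  rcases Dart.incAdj_iff.1 hbd with h | h | h
  · exact hlt.ne (congrArg _ (Dart.ext _ _ (Prod.ext h.symm (hb.trans hd.symm))))
  · exact d.adj.ne (h.trans (hb.trans hd.symm))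
  · exact b.adj.ne (h.symm.trans (hd.trans hb.symm))

lemma card_forbiddenColors_le_of_fst_eq (hΔ : 2 ≤ G.maxDegree) {d : G.Dart} (hd : d.fst = r) :
    #(forbiddenColors Dart.IncAdj (G.dartKey r) d) ≤ 3 * G.maxDegree - 3 := by
  set A := (G.dartsFrom d.fst).erase d
  set B := G.dartsFrom d.snd
  have hsub : forbiddenColors Dart.IncAdj (G.dartKey r) d ⊆
      (A ∪ B).image (greedyColoring Dart.IncAdj (G.dartKey r)) := by
    refine image_subset_iff.2 fun b hb => ?_
    obtain ⟨hbd, hlt⟩ := mem_earlierConflicts.1 hb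
    rcases hbd.cases (ne_of_apply_ne _ hlt.ne) with hA | hB | hC
    · exact mem_image_of_mem _ (mem_union_left _ hA)
    · exact mem_image_of_mem _ (mem_union_right _ (mem_dartsFrom.2 hB))
    · -- the darts into `r` all have colour `0`, as does `d.symm ∈ B`
      rw [greedyColoring_dartKey_eq_zero ((mem_dartsTo.1 (mem_of_mem_erase hC)).trans hd)]
      exact mem_image.2 ⟨d.symm, mem_union_right _ (mem_dartsFrom.2 rfl),
        greedyColoring_dartKey_eq_zero hd⟩
  calc #(forbiddenColors Dart.IncAdj (G.dartKey r) d) ≤ #(A ∪ B) :=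
        (card_le_card hsub).trans card_image_le
    _ ≤ #A + #B := card_union_le _ _
    _ ≤ 3 * G.maxDegree - 3 := by
      have := G.degree_le_maxDegree d.fst
      have := G.degree_le_maxDegree d.snd
      rw [card_erase_dartsFrom, card_dartsFrom]
      omega

lemma card_forbiddenColors_le_of_distKey_snd_lt {d : G.Dart} (hd : d.fst ≠ r) {p : V}
    (hp : G.Adj d.fst p) (hdp : G.distKey r d.fst < G.distKey r p)
    (hsnd : G.distKey r d.snd < G.distKey r d.fst) :
    #(forbiddenColors Dart.IncAdj (G.dartKey r) d) ≤ 3 * G.maxDegree - 3 := by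
  set A := (G.dartsFrom d.fst).erase d
  set B := G.dartsFrom d.snd
  set C := (G.dartsTo d.fst).erase d.symm
  let e : G.Dart := ⟨(p, d.fst), hp.symm⟩
  have he : e ∈ C := mem_erase.2
    ⟨fun h => (hsnd.trans hdp).ne' (congrArg (fun x : G.Dart => G.distKey r x.fst) h),
      mem_dartsTo.2 rfl⟩
  have hsub : earlierConflicts Dart.IncAdj (G.dartKey r) d ⊆ A ∪ B ∪ C.erase e := by
    intro b hb
    obtain ⟨hbd, hlt⟩ := mem_earlierConflicts.1 hb
    rcases hbd.cases (ne_of_apply_ne _ hlt.ne) with hA | hB | hC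
    · exact mem_union_left _ (mem_union_left _ hA)
    · exact mem_union_left _ (mem_union_right _ (mem_dartsFrom.2 hB))
    · -- `e` leaves `p`, which is closer to `r` than `d.fst`, so it comes after `d`
      refine mem_union_right _ (mem_erase.2 ⟨fun h => ?_, hC⟩)
      rw [h] at hlt
      exact (distKey_le_of_dartKey_lt hd hlt).not_gt hdp
  have hC : 0 < #C := card_pos.2 ⟨e, he⟩
  calc #(forbiddenColors Dart.IncAdj (G.dartKey r) d)
      ≤ #(A ∪ B ∪ C.erase e) := card_image_le.trans (card_le_card hsub)
    _ ≤ #A + #B + #(C.erase e) :=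
        (card_union_le _ _).trans (Nat.add_le_add_right (card_union_le _ _) _)
    _ ≤ 3 * G.maxDegree - 3 := by
      have := G.degree_le_maxDegree d.fst
      have := G.degree_le_maxDegree d.snd
      rw [card_erase_of_mem he]
      rw [card_erase_dartsTo] at hC ⊢
      rw [card_erase_dartsFrom, card_dartsFrom]
      omega

lemma card_forbiddenColors_le_of_distKey_fst_lt (hΔ : 2 ≤ G.maxDegree) {d : G.Dart}
    (hfst : G.distKey r d.fst < G.distKey r d.snd) :
    #(forbiddenColors Dart.IncAdj (G.dartKey r) d) ≤ 3 * G.maxDegree - 3 := by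
  set A := (G.dartsFrom d.fst).erase d
  set B := (G.dartsFrom d.snd).filter (·.snd = r)
  set C := (G.dartsTo d.fst).erase d.symm
  have hB : #B ≤ 1 := card_le_one.2 fun b hb b' hb' => by
    simp only [B, mem_filter, mem_dartsFrom] at hb hb'
    exact Dart.ext _ _ (Prod.ext (hb.1.trans hb'.1.symm) (hb.2.trans hb'.2.symm))
  have hsub : earlierConflicts Dart.IncAdj (G.dartKey r) d ⊆ A ∪ B ∪ C := by
    intro b hb
    obtain ⟨hbd, hlt⟩ := mem_earlierConflicts.1 hb
    rcases hbd.cases (ne_of_apply_ne _ hlt.ne) with hA | hB | hC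
    · exact mem_union_left _ (mem_union_left _ hA)
    · refine mem_union_left _ (mem_union_right _ (mem_filter.2 ⟨mem_dartsFrom.2 hB, ?_⟩))
      by_contra h
      exact (hB ▸ distKey_le_of_dartKey_lt h hlt).not_gt hfst
    · exact mem_union_right _ hC
  calc #(forbiddenColors Dart.IncAdj (G.dartKey r) d)
      ≤ #(A ∪ B ∪ C) := card_image_le.trans (card_le_card hsub)
    _ ≤ #A + #B + #C := (card_union_le _ _).trans (Nat.add_le_add_right (card_union_le _ _) _)
    _ ≤ 3 * G.maxDegree - 3 := by
      have := G.degree_le_maxDegree d.fst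
      rw [card_erase_dartsFrom, card_erase_dartsTo]
      omega

lemma greedyColoring_dartKey_lt (hconn : G.Connected) (hΔ : 2 ≤ G.maxDegree) (d : G.Dart) :
    greedyColoring Dart.IncAdj (G.dartKey r) d < 3 * G.maxDegree - 2 := by
  refine greedyColoring_lt_of_card_lt (Nat.lt_of_le_of_lt ?_ (by omega : 3 * G.maxDegree - 3 < _))
  by_cases hd : d.fst = r
  · exact card_forbiddenColors_le_of_fst_eq hΔ hd
  obtain ⟨p, hp, hdist⟩ := (hconn.preconnected d.fst r).exists_adj_dist_lt hd
  rcases (distKey_injective.ne d.adj.ne).lt_or_gt with h | h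
  · exact card_forbiddenColors_le_of_distKey_fst_lt hΔ h
  · exact card_forbiddenColors_le_of_distKey_snd_lt hd hp (distKey_lt_of_dist_lt hdist) h

lemma isDartIncColoring_greedyColoring (hconn : G.Connected) (hΔ : 2 ≤ G.maxDegree) :
    G.IsDartIncColoring (3 * G.maxDegree - 2) (greedyColoring Dart.IncAdj (G.dartKey r)) :=
  ⟨greedyColoring_dartKey_lt hconn hΔ, fun _ _ hne h =>
    greedyColoring_ne (fun _ _ => Dart.IncAdj.symm) dartKey_injective hne h⟩

end SimpleGraph

/-- For every connected simple graph `G` with at least three vertices,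
`Δ(G) + 1 ≤ χᵢ(G) ≤ 3Δ(G) - 2`. -/
theorem incChromaticNumber_bounds {V : Type*} [Fintype V] (G : SimpleGraph V)
    [DecidableRel G.Adj] (hconn : G.Connected) (hcard : 3 ≤ Fintype.card V) :
    G.maxDegree + 1 ≤ incChromaticNumber G ∧
    incChromaticNumber G ≤ 3 * G.maxDegree - 2 := by
  let : LinearOrder V := LinearOrder.lift' _ (Fintype.equivFin V).injective
  have := hconn.nonempty
  obtain ⟨v, hv⟩ := G.exists_maximal_degree_vertex
  have hΔ := hconn.two_le_maxDegree hcard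
  obtain ⟨u, hu⟩ := (G.degree_pos_iff_exists_adj v).1 (by omega)
  have hcol : ∃ c, G.IsDartIncColoring (3 * G.maxDegree - 2) c :=
    ⟨_, SimpleGraph.isDartIncColoring_greedyColoring (r := v) hconn hΔ⟩
  rw [SimpleGraph.incChromaticNumber_eq_sInf_isDartIncColoring]
  exact ⟨le_csInf ⟨_, hcol⟩ fun k ⟨c, hc⟩ => hv ▸ hc.degree_lt hu.symm, Nat.sInf_le hcol⟩
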